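/- arXiv:2303.16879 — 4 statements merged into one kernel-verified Lean document; each statement's English description precedes it below -/
import Mathlib

section
/- Let q ≥ 2, a ≥ 1, integers k_1 ≥ k_2 ≥ … ≥ k_a ≥ 0 =: k_{a+1}, and vectors b_1,…,b_{k_1} ∈ ℤ_qⁿ that are linearly independent over ℤ_q (a ℤ_q-linear combination Σ c_i·b_i = 0 forces all c_i = 0), and let Λ_D be the associated Construction D set. Then |Λ_D ∩ [0,q^a)ⁿ| = q^{k_1 + k_2 + … + k_a}, and Λ_D is an additive subgroup of ℤⁿ of index [ℤⁿ : Λ_D] = q^{an − (k_1 + k_2 + … + k_a)}. -/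
/-!
Let `I` be the set of index pairs `(s, i)` with `1 ≤ s ≤ a`, `k_{s+1} < i ≤ k_s`, and let
`C ⊆ ℤⁿ` be the image of `γ ↦ ∑_{(s,i) ∈ I} γ_{s,i} q^{a-s} σ(b_i)` on `ℤ^I`. Since
`O(b_i) q^{s-1} = q^s`, reducing each `γ_{s,i}` modulo `q^s` only moves the image by an element
of `q^a ℤⁿ`, so `Λ_D = q^a ℤⁿ + C` is a group. Independence of the `b_i` modulo `q` lifts to
independence modulo `q^a`, so `γ` is mapped into `q^a ℤⁿ` exactly when `q^s ∣ γ_{s,i}` for all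
`(s, i)`. By the second isomorphism theorem `[Λ_D : q^a ℤⁿ] = ∏_{(s,i)} q^s = q^{k_1 + ⋯ + k_a}`.
The box `[0, q^a)ⁿ` is a system of representatives of `ℤⁿ / q^a ℤⁿ`, so it meets `Λ_D` in that
many points, and `[ℤⁿ : Λ_D] = q^{an} / q^{k_1 + ⋯ + k_a}`.
-/

/-- The Construction D set associated to `q`, `a`, parameters `k` (with `k (a+1) = 0`)
and vectors `b 1, …, b (k 1)` in `ℤ_qⁿ`. -/
def lambdaD (q a n : ℕ) (k : ℕ → ℕ) (b : ℕ → Fin n → ZMod q) : Set (Fin n → ℤ) :=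
  {v | ∃ z : Fin n → ℤ, ∃ α : ℕ → ℕ → ℕ,
    (∀ s, 1 ≤ s → s ≤ a → ∀ i, k (s + 1) < i → i ≤ k s →
      α s i < addOrderOf (b i) * q ^ (s - 1)) ∧
    v = fun t => (q : ℤ) ^ a * z t
      + ∑ s ∈ Finset.Icc 1 a, ∑ i ∈ Finset.Ioc (k (s + 1)) (k s),
          (α s i : ℤ) * (q : ℤ) ^ (a - s) * (((b i) t).val : ℤ)}

open Finset

section Lifting

variable {ι κ : Type*} [Fintype ι]

theorem pow_dvd_of_forall_pow_dvd_sum {q : ℤ} (hq : q ≠ 0) {v : ι → κ → ℤ}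
    (hv : ∀ c : ι → ℤ, (∀ t, q ∣ ∑ i, c i * v i t) → ∀ i, q ∣ c i) (m : ℕ) :
    ∀ c : ι → ℤ, (∀ t, q ^ m ∣ ∑ i, c i * v i t) → ∀ i, q ^ m ∣ c i := by
  induction m with
  | zero => simp
  | succ m ih =>
    intro c hc
    choose d hd using hv c fun t => (dvd_pow_self q m.succ_ne_zero).trans (hc t)
    have hsum : ∀ t, ∑ i, c i * v i t = q * ∑ i, d i * v i t := fun t => by
      simp only [hd, mul_sum, mul_assoc]
    have hdm : ∀ t, q ^ m ∣ ∑ i, d i * v i t := fun t =>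
      (mul_dvd_mul_iff_left hq).mp (by rw [← pow_succ', ← hsum]; exact hc t)
    intro i
    rw [hd i, pow_succ']
    exact mul_dvd_mul_left q (ih d hdm i)

variable {q : ℕ} [NeZero q] {b : ι → κ → ZMod q}

theorem LinearIndependent.natCast_dvd_of_dvd_sum_val (hb : LinearIndependent (ZMod q) b)
    (c : ι → ℤ) (hc : ∀ t, (q : ℤ) ∣ ∑ i, c i * (b i t).val) (i : ι) : (q : ℤ) ∣ c i := by
  rw [← ZMod.intCast_zmod_eq_zero_iff_dvd]
  refine Fintype.linearIndependent_iff.mp hb (fun i => (c i : ZMod q)) ?_ i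
  funext t
  simpa using (ZMod.intCast_zmod_eq_zero_iff_dvd _ q).mpr (hc t)

theorem LinearIndependent.pow_dvd_of_pow_dvd_sum_val (hb : LinearIndependent (ZMod q) b)
    (m : ℕ) (c : ι → ℤ) (hc : ∀ t, (q : ℤ) ^ m ∣ ∑ i, c i * (b i t).val) (i : ι) :
    (q : ℤ) ^ m ∣ c i :=
  pow_dvd_of_forall_pow_dvd_sum (Nat.cast_ne_zero.mpr (NeZero.ne q))
    hb.natCast_dvd_of_dvd_sum_val m c hc i

end Lifting

theorem addOrderOf_eq_of_injective_smul {q : ℕ} {M : Type*} [AddCommGroup M] [Module (ZMod q) M]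
    {x : M} (hx : Function.Injective fun c : ZMod q => c • x) : addOrderOf x = q := by
  simpa [ZMod.addOrderOf_one] using addOrderOf_injective ((smulAddHom (ZMod q) M).flip x) hx 1

section Lattice

variable {ι : Type*}

def piZMultiples (m : ι → ℤ) : AddSubgroup (ι → ℤ) :=
  AddSubgroup.pi Set.univ fun t => AddSubgroup.zmultiples (m t)

theorem mem_piZMultiples {m v : ι → ℤ} : v ∈ piZMultiples m ↔ ∀ t, m t ∣ v t := by
  simp [piZMultiples, AddSubgroup.mem_pi, Int.mem_zmultiples_iff]

theorem index_piZMultiples [Fintype ι] (m : ι → ℤ) :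
    (piZMultiples m).index = ∏ t, (m t).natAbs := by
  simp [piZMultiples, AddSubgroup.index_pi, Int.index_zmultiples]

theorem ncard_inter_box_eq_relIndex {m : ℤ} (hm : 0 < m) {G : AddSubgroup (ι → ℤ)}
    (hG : piZMultiples (fun _ => m) ≤ G) :
    ((G : Set (ι → ℤ)) ∩ {v | ∀ t, 0 ≤ v t ∧ v t < m}).ncard
      = (piZMultiples fun _ => m).relIndex G := by
  set H := piZMultiples fun _ : ι => m
  rw [← Nat.card_coe_set_eq]
  refine Nat.card_congr (Equiv.ofBijective
    (fun v => (QuotientAddGroup.mk ⟨v.1, v.2.1⟩ : G ⧸ H.addSubgroupOf G)) ⟨?_, ?_⟩)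
  · rintro ⟨v, _, hv⟩ ⟨w, _, hw⟩ h
    rw [QuotientAddGroup.eq, AddSubgroup.mem_addSubgroupOf, mem_piZMultiples] at h
    ext t
    have hvw : v t % m = w t % m := Int.modEq_iff_dvd.mpr (by simpa [neg_add_eq_sub] using h t)
    rwa [Int.emod_eq_of_lt (hv t).1 (hv t).2, Int.emod_eq_of_lt (hw t).1 (hw t).2] at hvw
  · intro x
    obtain ⟨⟨g, hg⟩, rfl⟩ := QuotientAddGroup.mk_surjective x
    have hcarry : g - (fun t => g t % m) ∈ H :=
      mem_piZMultiples.mpr fun t => Int.dvd_self_sub_emod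
    refine ⟨⟨fun t => g t % m, by simpa using G.sub_mem hg (hG hcarry),
      fun t => ⟨Int.emod_nonneg _ hm.ne', Int.emod_lt_of_pos _ hm⟩⟩, ?_⟩
    rw [QuotientAddGroup.eq, AddSubgroup.mem_addSubgroupOf]
    simpa [neg_add_eq_sub] using hcarry

end Lattice

theorem sum_Icc_mul_tsub_succ_add (k : ℕ → ℕ) (a : ℕ)
    (hk : ∀ s, 1 ≤ s → s ≤ a → k (s + 1) ≤ k s) :
    ∑ s ∈ Icc 1 a, s * (k s - k (s + 1)) + a * k (a + 1) = ∑ s ∈ Icc 1 a, k s := by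
  induction a with
  | zero => simp
  | succ m ih =>
    rw [sum_Icc_succ_top (by omega), sum_Icc_succ_top (by omega),
      ← ih fun s hs _ => hk s hs (by omega)]
    have hstep : (m + 1) * (k (m + 1) - k (m + 1 + 1)) + (m + 1) * k (m + 1 + 1)
        = (m + 1) * k (m + 1) := by
      rw [← mul_add, Nat.sub_add_cancel (hk (m + 1) (by omega) le_rfl)]
    linarith

section ConstructionD

variable {q a n : ℕ} {k : ℕ → ℕ} {b : ℕ → Fin n → ZMod q}

variable (a k) in
def blockIndex : Finset (Σ _ : ℕ, ℕ) :=
  (Icc 1 a).sigma fun s => Ioc (k (s + 1)) (k s)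

theorem mem_blockIndex {p : Σ _ : ℕ, ℕ} :
    p ∈ blockIndex a k ↔ (1 ≤ p.1 ∧ p.1 ≤ a) ∧ k (p.1 + 1) < p.2 ∧ p.2 ≤ k p.1 := by
  simp [blockIndex]

theorem sum_fst_blockIndex (hk : ∀ s, 1 ≤ s → s ≤ a → k (s + 1) ≤ k s) (hka : k (a + 1) = 0) :
    ∑ p ∈ blockIndex a k, p.1 = ∑ s ∈ Icc 1 a, k s := by
  rw [blockIndex, sum_sigma, ← sum_Icc_mul_tsub_succ_add k a hk, hka, mul_zero, add_zero]
  refine sum_congr rfl fun s _ => ?_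
  rw [sum_const, Nat.card_Ioc, smul_eq_mul, mul_comm]

theorem linearIndependent_blockIndex (hk : AntitoneOn k (Set.Icc 1 a))
    (hb : LinearIndepOn (ZMod q) b (Icc 1 (k 1) : Set ℕ)) :
    LinearIndependent (ZMod q) fun p : blockIndex a k => b p.1.2 := by
  have hsub : Sigma.snd '' (blockIndex a k : Set (Σ _ : ℕ, ℕ)) ⊆ (Icc 1 (k 1) : Set ℕ) := by
    rintro _ ⟨p, hp, rfl⟩
    obtain ⟨⟨hs1, hsa⟩, hlt, hle⟩ := mem_blockIndex.mp hp
    have := hk ⟨le_rfl, hs1.trans hsa⟩ ⟨hs1, hsa⟩ hs1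
    simp only [coe_Icc, Set.mem_Icc]
    omega
  have hinj : Set.InjOn Sigma.snd (blockIndex a k : Set (Σ _ : ℕ, ℕ)) := by
    have hnlt : ∀ s s' i, (⟨s, i⟩ : Σ _ : ℕ, ℕ) ∈ blockIndex a k → ⟨s', i⟩ ∈ blockIndex a k →
        ¬ s < s' := by
      intro s s' i hp hp' h
      simp only [mem_blockIndex] at hp hp'
      have := hk ⟨by omega, by omega⟩ ⟨by omega, by omega⟩ (show s + 1 ≤ s' from h)
      omega
    rintro ⟨s, i⟩ hp ⟨s', i'⟩ hp' (rfl : i = i')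
    obtain rfl : s = s' := by
      have := hnlt s s' i hp hp'
      have := hnlt s' s i hp' hp
      omega
    rfl
  exact (hb.mono hsub).comp_of_image hinj

variable (q a n k b) in
def codeword : (blockIndex a k → ℤ) →+ (Fin n → ℤ) where
  toFun γ t := ∑ p, γ p * (q : ℤ) ^ (a - p.1.1) * ((b p.1.2 t).val : ℤ)
  map_zero' := by ext; simp
  map_add' γ δ := by ext; simp [add_mul, sum_add_distrib]

theorem codeword_apply (γ : blockIndex a k → ℤ) (t : Fin n) :
    codeword q a n k b γ t = ∑ p, γ p * (q : ℤ) ^ (a - p.1.1) * ((b p.1.2 t).val : ℤ) := rfl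

theorem sum_sum_eq_codeword (α : ℕ → ℕ → ℕ) (t : Fin n) :
    ∑ s ∈ Icc 1 a, ∑ i ∈ Ioc (k (s + 1)) (k s), (α s i : ℤ) * (q : ℤ) ^ (a - s) * ((b i t).val : ℤ)
      = codeword q a n k b (fun p => α p.1.1 p.1.2) t := by
  rw [codeword_apply, sum_coe_sort (blockIndex a k)
    (fun p => (α p.1 p.2 : ℤ) * (q : ℤ) ^ (a - p.1) * ((b p.2 t).val : ℤ)), blockIndex, sum_sigma]

theorem codeword_mem_piZMultiples (γ : blockIndex a k → ℤ) (hγ : ∀ p, (q : ℤ) ^ p.1.1 ∣ γ p) :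
    codeword q a n k b γ ∈ piZMultiples fun _ => (q : ℤ) ^ a := by
  refine mem_piZMultiples.mpr fun t => dvd_sum fun p _ => ?_
  rw [← pow_mul_pow_sub _ (mem_blockIndex.mp p.2).1.2]
  exact (mul_dvd_mul_right (hγ p) _).mul_right _

theorem pow_dvd_of_codeword_mem_piZMultiples [NeZero q]
    (hb : LinearIndependent (ZMod q) fun p : blockIndex a k => b p.1.2) {γ : blockIndex a k → ℤ}
    (hγ : codeword q a n k b γ ∈ piZMultiples fun _ => (q : ℤ) ^ a) (p : blockIndex a k) :
    (q : ℤ) ^ p.1.1 ∣ γ p := by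
  have := hb.pow_dvd_of_pow_dvd_sum_val a (fun p => γ p * (q : ℤ) ^ (a - p.1.1))
    (mem_piZMultiples.mp hγ) p
  rw [← pow_mul_pow_sub _ (mem_blockIndex.mp p.2).1.2] at this
  exact (mul_dvd_mul_iff_right (pow_ne_zero _ (Nat.cast_ne_zero.mpr (NeZero.ne q)))).mp this

theorem comap_codeword_piZMultiples [NeZero q]
    (hb : LinearIndependent (ZMod q) fun p : blockIndex a k => b p.1.2) :
    (piZMultiples fun _ => (q : ℤ) ^ a).comap (codeword q a n k b)
      = piZMultiples fun p : blockIndex a k => (q : ℤ) ^ p.1.1 := by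
  ext γ
  rw [AddSubgroup.mem_comap]
  exact ⟨fun h => mem_piZMultiples.mpr (pow_dvd_of_codeword_mem_piZMultiples hb h),
    fun h => codeword_mem_piZMultiples γ (mem_piZMultiples.mp h)⟩

theorem lambdaD_eq_sup [NeZero q] (horder : ∀ p ∈ blockIndex a k, addOrderOf (b p.2) = q) :
    lambdaD q a n k b
      = ↑(piZMultiples (fun _ => (q : ℤ) ^ a) ⊔ (codeword q a n k b).range) := by
  have hqpow : ∀ s, (0 : ℤ) < (q : ℤ) ^ s := fun s =>
    pow_pos (Nat.cast_pos.mpr (Nat.pos_of_ne_zero (NeZero.ne q))) s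
  ext v
  rw [SetLike.mem_coe, AddSubgroup.mem_sup]
  constructor
  · rintro ⟨z, α, -, rfl⟩
    refine ⟨fun t => (q : ℤ) ^ a * z t, mem_piZMultiples.mpr fun t => dvd_mul_right _ _, _,
      ⟨fun p => α p.1.1 p.1.2, rfl⟩, ?_⟩
    funext t
    rw [Pi.add_apply, sum_sum_eq_codeword]
  · rintro ⟨h, hh, _, ⟨γ, rfl⟩, rfl⟩
    set carry : blockIndex a k → ℤ := fun p => (q : ℤ) ^ p.1.1 * (γ p / (q : ℤ) ^ p.1.1)
    choose z hz using mem_piZMultiples.mp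
      (add_mem hh (codeword_mem_piZMultiples (b := b) carry fun p => dvd_mul_right _ _))
    set α : ℕ → ℕ → ℕ := fun s i =>
      if hp : ⟨s, i⟩ ∈ blockIndex a k then (γ ⟨_, hp⟩ % (q : ℤ) ^ s).toNat else 0
    have hα : ∀ p : blockIndex a k, (α p.1.1 p.1.2 : ℤ) = γ p % (q : ℤ) ^ p.1.1 := fun p => by
      simp [α, p.2, Int.emod_nonneg _ (hqpow _).ne']
    refine ⟨z, α, fun s hs1 hsa i hi1 hi2 => ?_, ?_⟩
    · have hp : ⟨s, i⟩ ∈ blockIndex a k := mem_blockIndex.mpr ⟨⟨hs1, hsa⟩, hi1, hi2⟩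
      rw [horder _ hp, ← pow_succ', Nat.sub_add_cancel hs1, ← Nat.cast_lt (α := ℤ), Nat.cast_pow]
      exact (hα ⟨_, hp⟩).trans_lt (Int.emod_lt_of_pos _ (hqpow s))
    · have hsplit : codeword q a n k b γ
          = codeword q a n k b carry + codeword q a n k b fun p => (α p.1.1 p.1.2 : ℤ) := by
        rw [← map_add]
        congr 1
        funext p
        rw [Pi.add_apply, hα]
        exact (Int.mul_ediv_add_emod _ _).symm
      funext t
      rw [sum_sum_eq_codeword, ← hz t, hsplit]
      simp only [Pi.add_apply]
      ring

theorem relIndex_sup_codeword [NeZero q] (hk : ∀ s, 1 ≤ s → s ≤ a → k (s + 1) ≤ k s)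
    (hka : k (a + 1) = 0) (hb : LinearIndependent (ZMod q) fun p : blockIndex a k => b p.1.2) :
    (piZMultiples fun _ => (q : ℤ) ^ a).relIndex
      (piZMultiples (fun _ => (q : ℤ) ^ a) ⊔ (codeword q a n k b).range)
      = q ^ ∑ s ∈ Icc 1 a, k s := by
  rw [AddSubgroup.relIndex_sup_left, ← AddSubgroup.index_comap, comap_codeword_piZMultiples hb,
    index_piZMultiples, ← sum_fst_blockIndex hk hka, ← prod_pow_eq_pow_sum]
  simp only [Int.natAbs_pow, Int.natAbs_natCast]
  exact prod_coe_sort (blockIndex a k) fun p => q ^ p.1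

end ConstructionD

theorem eq_pow_sub_of_pow_mul_eq {q m N x : ℕ} (hq : 1 < q) (h : q ^ m * x = q ^ N) :
    x = q ^ (N - m) := by
  have hmN : m ≤ N := (Nat.pow_dvd_pow_iff_le_right hq).mp (Dvd.intro x h)
  rw [← Nat.pow_div hmN (by omega), ← h, Nat.mul_div_cancel_left _ (by positivity)]

theorem card_lambdaD_box_of_linearIndependent_general
    (q a n : ℕ) (hq : 2 ≤ q)
    (k : ℕ → ℕ) (hk : ∀ s, 1 ≤ s → s ≤ a → k (s + 1) ≤ k s) (hka : k (a + 1) = 0)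
    (b : ℕ → Fin n → ZMod q)
    (hli : ∀ c : ℕ → ZMod q,
      (∑ i ∈ Finset.Icc 1 (k 1), c i • b i) = 0 → ∀ i ∈ Finset.Icc 1 (k 1), c i = 0) :
    Set.ncard (lambdaD q a n k b ∩ {v : Fin n → ℤ | ∀ t, 0 ≤ v t ∧ v t < (q : ℤ) ^ a})
      = q ^ (∑ ℓ ∈ Finset.Icc 1 a, k ℓ) ∧
    ∃ G : AddSubgroup (Fin n → ℤ), (G : Set (Fin n → ℤ)) = lambdaD q a n k b ∧
      G.index = q ^ (a * n - ∑ ℓ ∈ Finset.Icc 1 a, k ℓ) := by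
  have : NeZero q := ⟨by omega⟩
  have hanti : AntitoneOn k (Set.Icc 1 a) :=
    antitoneOn_of_succ_le Set.ordConnected_Icc fun s _ hs _ => hk s hs.1 hs.2
  have hb : LinearIndependent (ZMod q) fun p : blockIndex a k => b p.1.2 :=
    linearIndependent_blockIndex hanti (linearIndepOn_finset_iff.mpr hli)
  have hΛ : lambdaD q a n k b = _ := lambdaD_eq_sup fun p hp =>
    addOrderOf_eq_of_injective_smul (hb.smul_left_injective ⟨p, hp⟩)
  set H := piZMultiples fun _ : Fin n => (q : ℤ) ^ a
  set G := H ⊔ (codeword q a n k b).range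
  have hrel : H.relIndex G = q ^ ∑ ℓ ∈ Icc 1 a, k ℓ := relIndex_sup_codeword hk hka hb
  refine ⟨?_, G, hΛ.symm, ?_⟩
  · rw [hΛ, ncard_inter_box_eq_relIndex (pow_pos (by positivity) a) le_sup_left, hrel]
  · have hmul := AddSubgroup.relIndex_mul_index (le_sup_left : H ≤ G)
    rw [hrel, index_piZMultiples] at hmul
    refine eq_pow_sub_of_pow_mul_eq (by omega) (hmul.trans ?_)
    simp only [Int.natAbs_pow, Int.natAbs_natCast, prod_const, card_univ, Fintype.card_fin,
      pow_mul]

/-- If `b 1, …, b (k 1)` are linearly independent over `ℤ_q`, then the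
Construction D set has exactly `q^{k_1 + ⋯ + k_a}` points in `[0, q^a)ⁿ`, and it is an
additive subgroup of `ℤⁿ` of index `q^{an - (k_1 + ⋯ + k_a)}`. -/
theorem card_lambdaD_box_of_linearIndependent
    (q a n : ℕ) (hq : 2 ≤ q) (ha : 1 ≤ a)
    (k : ℕ → ℕ) (hk : ∀ s, 1 ≤ s → s ≤ a → k (s + 1) ≤ k s) (hka : k (a + 1) = 0)
    (b : ℕ → Fin n → ZMod q)
    (hli : ∀ c : ℕ → ZMod q,
      (∑ i ∈ Finset.Icc 1 (k 1), c i • b i) = 0 → ∀ i ∈ Finset.Icc 1 (k 1), c i = 0) :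
    Set.ncard (lambdaD q a n k b ∩ {v : Fin n → ℤ | ∀ t, 0 ≤ v t ∧ v t < (q : ℤ) ^ a})
      = q ^ (∑ ℓ ∈ Finset.Icc 1 a, k ℓ) ∧
    ∃ G : AddSubgroup (Fin n → ℤ), (G : Set (Fin n → ℤ)) = lambdaD q a n k b ∧
      G.index = q ^ (a * n - ∑ ℓ ∈ Finset.Icc 1 a, k ℓ) :=
  card_lambdaD_box_of_linearIndependent_general q a n hq k hk hka b hli
end

section
/- Let q ≥ 2, a ≥ 1, integers n = k_1 ≥ k_2 ≥ … ≥ k_a ≥ 0 =: k_{a+1}, and nonzero vectors b_1,…,b_n ∈ ℤ_qⁿ such that: (i) after some permutation of the indices, the n × n integer matrix whose rows are σ(b_1),…,σ(b_n) is upper triangular with nonzero diagonal entries; and (ii) for each i, the first nonzero entry of σ(b_i) divides q and divides every other entry of σ(b_i). Let Λ_D be the associated Construction D set. Then |Λ_D ∩ [0,q^a)ⁿ| = q^{k_1 + k_2 + … + k_a} / ∏_{i=1}^{n} (q / O(b_i)), where O(b_i) is the order of b_i in ℤ_qⁿ. -/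
open Finset

lemma antitoneOn_Icc_of_succ_le {a : ℕ} {k : ℕ → ℕ}
    (hk : ∀ s, 1 ≤ s → s ≤ a → k (s + 1) ≤ k s) : AntitoneOn k (Set.Icc 1 (a + 1)) := by
  rintro x ⟨hx1, -⟩ y ⟨-, hy⟩ hxy
  induction y, hxy using Nat.le_induction with
  | base => exact le_rfl
  | succ y hxy ih => exact (hk y (by omega) (by omega)).trans (ih (by omega))

@[to_additive sum_Icc_one_eq_sum_fin]
lemma prod_Icc_one_eq_prod_fin {M : Type*} [CommMonoid M] (n : ℕ) (f : ℕ → M) :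
    ∏ i ∈ Icc 1 n, f i = ∏ i : Fin n, f (i + 1) := by
  rw [Fin.prod_univ_eq_prod_range (fun i => f (i + 1)), range_eq_Ico, prod_Ico_add',
    zero_add, Ico_add_one_right_eq_Icc]

lemma eq_of_first_ne_zero {M : Type*} [Zero M] {n : ℕ} {x : Fin n → M} {t j₀ : Fin n}
    (ht : ∀ j, j < t → x j = 0) (hxt : x t ≠ 0) (hj₀ : ∀ j, j < j₀ → x j = 0) (hxj₀ : x j₀ ≠ 0) :
    j₀ = t := by
  rcases lt_trichotomy j₀ t with h | h | h
  · exact absurd (ht _ h) hxj₀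
  · exact h
  · exact absurd (hj₀ _ h) hxt

lemma prod_mul_pow_pred_mul_prod_div {ι : Type*} (s : Finset ι) (q : ℕ) (O L : ι → ℕ)
    (hO : ∀ i ∈ s, O i ∣ q) (hL : ∀ i ∈ s, 1 ≤ L i) :
    (∏ i ∈ s, O i * q ^ (L i - 1)) * ∏ i ∈ s, q / O i = q ^ ∑ i ∈ s, L i := by
  rw [← prod_mul_distrib, ← prod_pow_eq_pow_sum]
  refine prod_congr rfl fun i hi => ?_
  rw [mul_right_comm, Nat.mul_div_cancel' (hO i hi), ← pow_succ', Nat.sub_add_cancel (hL i hi)]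

/-- For a nonincreasing chain `k 1 ≥ ⋯ ≥ k (a + 1)` and `k (a + 1) < i ≤ k 1`, this is the unique
`s ∈ [1, a]` with `k (s + 1) < i ≤ k s`: the layer of Construction D containing `b i`. -/
def level (a : ℕ) (k : ℕ → ℕ) (i : ℕ) : ℕ := Nat.findGreatest (fun s => i ≤ k s) a

section Level

variable {a : ℕ} {k : ℕ → ℕ}

lemma level_le (i : ℕ) : level a k i ≤ a := Nat.findGreatest_le a

lemma le_level_of_ne_zero {i : ℕ} (h : level a k i ≠ 0) : i ≤ k (level a k i) :=
  Nat.findGreatest_of_ne_zero (P := fun s => i ≤ k s) rfl h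

lemma mem_Ioc_level {i : ℕ} (hi : i ∈ Ioc (k (a + 1)) (k 1)) :
    1 ≤ level a k i ∧ i ∈ Ioc (k (level a k i + 1)) (k (level a k i)) := by
  rw [mem_Ioc] at hi
  have ha : a ≠ 0 := by
    rintro rfl
    rw [zero_add] at hi
    omega
  have hpos : 1 ≤ level a k i := Nat.le_findGreatest (by omega) hi.2
  refine ⟨hpos, mem_Ioc.2 ⟨?_, le_level_of_ne_zero (by omega)⟩⟩
  rcases (level_le i : level a k i ≤ a).lt_or_eq with hlt | heq
  · exact not_le.1 (Nat.findGreatest_is_greatest (P := fun s => i ≤ k s) (Nat.lt_succ_self _) hlt)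
  · rw [heq]
    exact hi.1

lemma level_eq_of_mem_Ioc (hk : AntitoneOn k (Set.Icc 1 (a + 1))) {s i : ℕ} (hs : s ∈ Icc 1 a)
    (hi : i ∈ Ioc (k (s + 1)) (k s)) : level a k i = s := by
  rw [mem_Icc] at hs
  rw [mem_Ioc] at hi
  refine Nat.findGreatest_eq_iff.2 ⟨hs.2, fun _ => hi.2, fun s' hs' hs'a hle => ?_⟩
  have : k s' ≤ k (s + 1) := hk ⟨by omega, by omega⟩ ⟨by omega, by omega⟩ hs'
  omega

lemma filter_level_eq_Ioc (hk : AntitoneOn k (Set.Icc 1 (a + 1))) {s : ℕ} (hs : s ∈ Icc 1 a) :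
    {i ∈ Ioc (k (a + 1)) (k 1) | level a k i = s} = Ioc (k (s + 1)) (k s) := by
  ext i
  constructor
  · rintro hi
    obtain ⟨hmem, rfl⟩ := mem_filter.1 hi
    exact (mem_Ioc_level hmem).2
  · intro hi
    rw [mem_Icc] at hs
    have h1 : k (a + 1) ≤ k (s + 1) := hk ⟨by omega, by omega⟩ ⟨by omega, le_rfl⟩ (by omega)
    have h2 : k s ≤ k 1 := hk ⟨le_rfl, by omega⟩ ⟨by omega, by omega⟩ hs.1
    refine mem_filter.2 ⟨?_, level_eq_of_mem_Ioc hk (mem_Icc.2 hs) hi⟩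
    rw [mem_Ioc] at hi ⊢
    omega

lemma sum_sum_Ioc_eq_sum_level {M : Type*} [AddCommMonoid M]
    (hk : AntitoneOn k (Set.Icc 1 (a + 1))) (f : ℕ → ℕ → M) :
    ∑ s ∈ Icc 1 a, ∑ i ∈ Ioc (k (s + 1)) (k s), f s i
      = ∑ i ∈ Ioc (k (a + 1)) (k 1), f (level a k i) i := by
  rw [← sum_fiberwise_of_maps_to (g := level a k) (t := Icc 1 a)
    fun i hi => mem_Icc.2 ⟨(mem_Ioc_level hi).1, level_le i⟩]
  refine sum_congr rfl fun s hs => ?_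
  rw [← filter_level_eq_Ioc hk hs]
  exact sum_congr rfl fun i hi => by rw [(mem_filter.1 hi).2]

lemma filter_le_eq_Icc_level (hk : AntitoneOn k (Set.Icc 1 (a + 1))) (i : ℕ) :
    {s ∈ Icc 1 a | i ≤ k s} = Icc 1 (level a k i) := by
  ext s
  simp only [mem_filter, mem_Icc]
  constructor
  · rintro ⟨⟨h1, h2⟩, h⟩
    exact ⟨h1, Nat.le_findGreatest h2 h⟩
  · rintro ⟨h1, h2⟩
    have hla := level_le (a := a) (k := k) i
    exact ⟨⟨h1, h2.trans hla⟩, (le_level_of_ne_zero (by omega)).trans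
      (hk ⟨h1, by omega⟩ ⟨by omega, by omega⟩ h2)⟩

lemma sum_level_eq_sum (hk : AntitoneOn k (Set.Icc 1 (a + 1))) :
    ∑ i ∈ Icc 1 (k 1), level a k i = ∑ s ∈ Icc 1 a, k s := by
  calc ∑ i ∈ Icc 1 (k 1), level a k i
      = ∑ i ∈ Icc 1 (k 1), #{s ∈ Icc 1 a | i ≤ k s} := by
        simp only [filter_le_eq_Icc_level hk, Nat.card_Icc, Nat.add_sub_cancel]
    _ = ∑ s ∈ Icc 1 a, #{i ∈ Icc 1 (k 1) | i ≤ k s} := by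
        simp only [card_filter]
        exact sum_comm
    _ = ∑ s ∈ Icc 1 a, k s := by
        refine sum_congr rfl fun s hs => ?_
        rw [mem_Icc] at hs
        have hs1 : k s ≤ k 1 := hk ⟨le_rfl, by omega⟩ ⟨hs.1, by omega⟩ hs.1
        have : {i ∈ Icc 1 (k 1) | i ≤ k s} = Icc 1 (k s) := by
          ext i
          simp only [mem_filter, mem_Icc]
          omega
        rw [this, Nat.card_Icc, Nat.add_sub_cancel]

end Level

lemma addOrderOf_mul_val_eq {ι : Type*} {q : ℕ} [NeZero q] (x : ι → ZMod q) (j : ι)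
    (hq : (x j).val ∣ q) (hx : ∀ i, (x j).val ∣ (x i).val) : addOrderOf x * (x j).val = q := by
  suffices addOrderOf x = q / (x j).val by rw [this, Nat.div_mul_cancel hq]
  apply Nat.dvd_antisymm
  · refine addOrderOf_dvd_of_nsmul_eq_zero (funext fun i => ?_)
    obtain ⟨m, hm⟩ := hx i
    rw [Pi.smul_apply, ← ZMod.natCast_zmod_val (x i), hm, nsmul_eq_mul, ← Nat.cast_mul,
      ← mul_assoc, Nat.div_mul_cancel hq, Nat.cast_mul, ZMod.natCast_self, zero_mul, Pi.zero_apply]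
  · have hj : addOrderOf (x j) = q / (x j).val := by
      conv_lhs => rw [← ZMod.natCast_zmod_val (x j)]
      rw [ZMod.addOrderOf_coe _ (NeZero.ne q), Nat.gcd_eq_right hq]
    rw [← hj]
    exact addOrderOf_dvd_of_nsmul_eq_zero (by rw [← Pi.smul_apply, addOrderOf_nsmul_eq_zero]; rfl)

def combMod {n : ℕ} (N : ℤ) (w : Fin n → Fin n → ℤ) (c : Fin n → ℕ) : Fin n → ℤ :=
  fun t => (∑ i, (c i : ℤ) * w i t) % N

lemma injOn_combMod_of_triangular {n : ℕ} {N : ℤ} (hN : N ≠ 0) (w : Fin n → Fin n → ℤ)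
    (m : Fin n → ℕ) (e : Equiv.Perm (Fin n)) (hzero : ∀ i j, j < i → w (e i) j = 0)
    (hpivot : ∀ i, w (e i) i * m (e i) = N) :
    Set.InjOn (combMod N w) (Fintype.piFinset fun i => range (m i)) := by
  intro c hc c' hc' h
  simp only [Fintype.coe_piFinset, Set.mem_pi, Set.mem_univ, coe_range, Set.mem_Iio,
    forall_const] at hc hc'
  have hcol : ∀ t, N ∣ ∑ j, ((c' (e j) : ℤ) - c (e j)) * w (e j) t := fun t => by
    rw [Equiv.sum_comp e fun i => ((c' i : ℤ) - c i) * w i t]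
    simpa [sub_mul, sum_sub_distrib] using (Int.ModEq.dvd (congrFun h t))
  suffices ∀ t, c (e t) = c' (e t) from funext fun i => by simpa using this (e.symm i)
  intro t
  induction t using WellFoundedLT.induction with
  | _ t ih =>
  have hsingle : ∑ j, ((c' (e j) : ℤ) - c (e j)) * w (e j) t
      = ((c' (e t) : ℤ) - c (e t)) * w (e t) t := by
    refine sum_eq_single t (fun j _ hjt => ?_) (by simp)
    rcases lt_or_gt_of_ne hjt with hlt | hgt
    · simp [ih j hlt]
    · simp [hzero j t hgt]
  have hp : w (e t) t ≠ 0 := by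
    rintro h0
    rw [← hpivot t, h0, zero_mul] at hN
    exact hN rfl
  have hdvd : (m (e t) : ℤ) ∣ (c' (e t) : ℤ) - c (e t) := by
    have := hcol t
    rw [hsingle, ← hpivot t, mul_comm (w (e t) t)] at this
    exact (mul_dvd_mul_iff_right hp).1 this
  have habs : |(c' (e t) : ℤ) - c (e t)| < m (e t) := by
    have := hc (e t)
    have := hc' (e t)
    rw [abs_sub_lt_iff]
    omega
  have := Int.eq_zero_of_abs_lt_dvd hdvd habs
  omega

def genD (q a n : ℕ) (k : ℕ → ℕ) (b : ℕ → Fin n → ZMod q) (i : ℕ) : Fin n → ℤ :=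
  fun t => (q : ℤ) ^ (a - level a k i) * ((b i t).val : ℤ)

noncomputable def coeffBoundD (q a n : ℕ) (k : ℕ → ℕ) (b : ℕ → Fin n → ZMod q) (i : ℕ) : ℕ :=
  addOrderOf (b i) * q ^ (level a k i - 1)

section ConstructionD

variable {q a n : ℕ} {k : ℕ → ℕ} {b : ℕ → Fin n → ZMod q}

lemma val_add_one_mem_Ioc (hka : k (a + 1) = 0) (hk1 : k 1 = n) (i : Fin n) :
    (i : ℕ) + 1 ∈ Ioc (k (a + 1)) (k 1) := by
  rw [hka, hk1, mem_Ioc]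
  omega

lemma sum_lambdaD_eq_sum_genD (hk : AntitoneOn k (Set.Icc 1 (a + 1))) (hka : k (a + 1) = 0)
    (hk1 : k 1 = n) (α : ℕ → ℕ → ℕ) (t : Fin n) :
    ∑ s ∈ Icc 1 a, ∑ i ∈ Ioc (k (s + 1)) (k s),
        (α s i : ℤ) * (q : ℤ) ^ (a - s) * ((b i t).val : ℤ)
      = ∑ i : Fin n, (α (level a k (i + 1)) (i + 1) : ℤ) * genD q a n k b (i + 1) t := by
  rw [sum_sum_Ioc_eq_sum_level hk, hka, hk1, ← Icc_add_one_left_eq_Ioc, zero_add,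
    sum_Icc_one_eq_sum_fin]
  simp only [genD, mul_assoc]

lemma lambdaD_inter_box_eq_image (hq : q ≠ 0) (hk : AntitoneOn k (Set.Icc 1 (a + 1)))
    (hka : k (a + 1) = 0) (hk1 : k 1 = n) :
    lambdaD q a n k b ∩ {v | ∀ t, 0 ≤ v t ∧ v t < (q : ℤ) ^ a}
      = combMod ((q : ℤ) ^ a) (fun i : Fin n => genD q a n k b (i + 1)) ''
          Fintype.piFinset fun i : Fin n => range (coeffBoundD q a n k b (i + 1)) := by
  have hN : (0 : ℤ) < (q : ℤ) ^ a := by positivity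
  ext v
  constructor
  · rintro ⟨⟨z, α, hα, rfl⟩, hbox⟩
    refine ⟨fun i => α (level a k (i + 1)) (i + 1), ?_, funext fun t => ?_⟩
    · simp only [Fintype.coe_piFinset, Set.mem_pi, Set.mem_univ, coe_range, Set.mem_Iio,
        forall_const]
      intro i
      obtain ⟨hL, hi⟩ := mem_Ioc_level (val_add_one_mem_Ioc hka hk1 i)
      exact hα _ hL (level_le _) _ (mem_Ioc.1 hi).1 (mem_Ioc.1 hi).2
    · have hv := Int.emod_eq_of_lt (hbox t).1 (hbox t).2
      beta_reduce at hv
      rw [combMod, ← sum_lambdaD_eq_sum_genD hk hka hk1, ← hv, Int.mul_add_emod_self_left]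
  · rintro ⟨c, hc, rfl⟩
    simp only [Fintype.coe_piFinset, Set.mem_pi, Set.mem_univ, coe_range, Set.mem_Iio,
      forall_const] at hc
    refine ⟨⟨fun t => -((∑ i, (c i : ℤ) * genD q a n k b (i + 1) t) / (q : ℤ) ^ a),
      fun _ i => if h : i - 1 < n then c ⟨i - 1, h⟩ else 0, ?_, ?_⟩,
      fun t => ⟨Int.emod_nonneg _ hN.ne', Int.emod_lt_of_pos _ hN⟩⟩
    · intro s hs1 hsa i hi1 hi2
      have hks : k s ≤ k 1 := hk ⟨le_rfl, by omega⟩ ⟨hs1, by omega⟩ hs1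
      obtain ⟨j, rfl⟩ : ∃ j, i = j + 1 := ⟨i - 1, by omega⟩
      have hj : j < n := by omega
      have := hc ⟨j, hj⟩
      simp only [Nat.add_sub_cancel, dif_pos hj, coeffBoundD] at this ⊢
      rwa [level_eq_of_mem_Ioc hk (mem_Icc.2 ⟨hs1, hsa⟩) (mem_Ioc.2 ⟨hi1, hi2⟩)] at this
    · funext t
      rw [sum_lambdaD_eq_sum_genD hk hka hk1]
      simp only [combMod, Nat.add_sub_cancel, Fin.is_lt, dif_pos, Fin.eta, Int.emod_def]
      ring

lemma ncard_lambdaD_inter_box (hq : q ≠ 0) (hk : AntitoneOn k (Set.Icc 1 (a + 1)))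
    (hka : k (a + 1) = 0) (hk1 : k 1 = n) (e : Equiv.Perm (Fin n))
    (hzero : ∀ i j : Fin n, j < i → b (e i + 1) j = 0)
    (hpiv : ∀ i : Fin n,
      (b (e i + 1) i).val ∣ q ∧ ∀ j, (b (e i + 1) i).val ∣ (b (e i + 1) j).val) :
    (lambdaD q a n k b ∩ {v | ∀ t, 0 ≤ v t ∧ v t < (q : ℤ) ^ a}).ncard
      = ∏ i ∈ Icc 1 n, addOrderOf (b i) * q ^ (level a k i - 1) := by
  have : NeZero q := ⟨hq⟩
  have hpivot : ∀ t : Fin n,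
      genD q a n k b (e t + 1) t * coeffBoundD q a n k b (e t + 1) = (q : ℤ) ^ a := fun t => by
    set L := level a k (e t + 1)
    have hL : 1 ≤ L := (mem_Ioc_level (val_add_one_mem_Ioc hka hk1 (e t))).1
    have hLa : L ≤ a := level_le _
    have hO : (q : ℤ) = addOrderOf (b (e t + 1)) * (b (e t + 1) t).val := by
      exact_mod_cast (addOrderOf_mul_val_eq _ _ (hpiv t).1 (hpiv t).2).symm
    have hsplit : (q : ℤ) ^ a = q ^ (a - L) * q ^ (L - 1) * q := by
      rw [← pow_add, ← pow_succ]
      congr 1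
      omega
    rw [hsplit, genD, coeffBoundD]
    push_cast
    linear_combination (-((q : ℤ) ^ (a - L) * (q : ℤ) ^ (L - 1))) * hO
  rw [lambdaD_inter_box_eq_image hq hk hka hk1,
    (injOn_combMod_of_triangular (by positivity) _ _ e
      (fun i j hji => by simp [genD, hzero i j hji]) hpivot).ncard_image,
    Set.ncard_coe_finset, Fintype.card_piFinset, prod_Icc_one_eq_prod_fin]
  simp [coeffBoundD]

end ConstructionD

theorem card_lambdaD_box_triangular_general
    (q a n : ℕ) (hq : 2 ≤ q)
    (k : ℕ → ℕ) (hk1 : k 1 = n)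
    (hk : ∀ s, 1 ≤ s → s ≤ a → k (s + 1) ≤ k s) (hka : k (a + 1) = 0)
    (b : ℕ → Fin n → ZMod q)
    (htri : ∃ e : Equiv.Perm (Fin n),
      (∀ i j : Fin n, (j : ℕ) < (i : ℕ) → (b ((e i : ℕ) + 1)) j = 0) ∧
      (∀ i : Fin n, (b ((e i : ℕ) + 1)) i ≠ 0))
    (hdiv : ∀ i, 1 ≤ i → i ≤ n → ∃ j₀ : Fin n,
      (∀ j : Fin n, (j : ℕ) < (j₀ : ℕ) → (b i) j = 0) ∧ (b i) j₀ ≠ 0 ∧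
      ((b i) j₀).val ∣ q ∧ ∀ j : Fin n, ((b i) j₀).val ∣ ((b i) j).val) :
    Set.ncard (lambdaD q a n k b ∩ {v : Fin n → ℤ | ∀ t, 0 ≤ v t ∧ v t < (q : ℤ) ^ a})
      = q ^ (∑ ℓ ∈ Finset.Icc 1 a, k ℓ)
        / ∏ i ∈ Finset.Icc 1 n, (q / addOrderOf (b i)) := by
  have hk' := antitoneOn_Icc_of_succ_le hk
  obtain ⟨e, hzero, hdiag⟩ := htri
  have hpiv : ∀ t : Fin n,
      (b (e t + 1) t).val ∣ q ∧ ∀ j, (b (e t + 1) t).val ∣ (b (e t + 1) j).val := fun t => by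
    obtain ⟨j₀, hbefore, hne, hjq, hall⟩ := hdiv (e t + 1) (by omega) (by omega)
    obtain rfl := eq_of_first_ne_zero (hzero t) (hdiag t) hbefore hne
    exact ⟨hjq, hall⟩
  have : NeZero q := ⟨by omega⟩
  have hO : ∀ i ∈ Icc 1 n, addOrderOf (b i) ∣ q := fun i _ =>
    addOrderOf_dvd_of_nsmul_eq_zero (funext fun t => by simp)
  have hL : ∀ i ∈ Icc 1 n, 1 ≤ level a k i := fun i hi =>
    (mem_Ioc_level (by rw [hka, hk1, mem_Ioc]; rw [mem_Icc] at hi; omega)).1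
  rw [ncard_lambdaD_inter_box (by omega) hk' hka hk1 e hzero hpiv]
  refine (Nat.div_eq_of_eq_mul_left (prod_pos fun i hi =>
    Nat.div_pos (Nat.le_of_dvd (by omega) (hO i hi)) (addOrderOf_pos _)) ?_).symm
  rw [prod_mul_pow_pred_mul_prod_div _ _ _ _ hO hL, ← sum_level_eq_sum hk', hk1]

/-- If `k 1 = n`, the nonzero vectors `b 1, …, b n` become, after a row
permutation, an upper triangular matrix with nonzero diagonal, and the first nonzero
entry of each `σ(b i)` divides `q` and all other entries of `σ(b i)`, then the number
of points of the Construction D set in `[0, q^a)ⁿ` equals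
`q^{k_1 + ⋯ + k_a} / ∏_{i=1}^{n} (q / O(b_i))`. -/
theorem card_lambdaD_box_triangular
    (q a n : ℕ) (hq : 2 ≤ q) (ha : 1 ≤ a)
    (k : ℕ → ℕ) (hk1 : k 1 = n)
    (hk : ∀ s, 1 ≤ s → s ≤ a → k (s + 1) ≤ k s) (hka : k (a + 1) = 0)
    (b : ℕ → Fin n → ZMod q)
    (hbne : ∀ i, 1 ≤ i → i ≤ n → b i ≠ 0)
    (htri : ∃ e : Equiv.Perm (Fin n),
      (∀ i j : Fin n, (j : ℕ) < (i : ℕ) → (b ((e i : ℕ) + 1)) j = 0) ∧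
      (∀ i : Fin n, (b ((e i : ℕ) + 1)) i ≠ 0))
    (hdiv : ∀ i, 1 ≤ i → i ≤ n → ∃ j₀ : Fin n,
      (∀ j : Fin n, (j : ℕ) < (j₀ : ℕ) → (b i) j = 0) ∧ (b i) j₀ ≠ 0 ∧
      ((b i) j₀).val ∣ q ∧ ∀ j : Fin n, ((b i) j₀).val ∣ ((b i) j).val) :
    Set.ncard (lambdaD q a n k b ∩ {v : Fin n → ℤ | ∀ t, 0 ≤ v t ∧ v t < (q : ℤ) ^ a})
      = q ^ (∑ ℓ ∈ Finset.Icc 1 a, k ℓ)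
        / ∏ i ∈ Finset.Icc 1 n, (q / addOrderOf (b i)) :=
  card_lambdaD_box_triangular_general q a n hq k hk1 hk hka b htri hdiv
end

section
/- Let q ≥ 2, a ≥ 1, 0 ≤ r_1 ≤ … ≤ r_a, and h_1,…,h_{r_a} ∈ ℤ_qⁿ that are linearly independent over ℤ_q (a ℤ_q-linear combination Σ c_j·h_j = 0 forces all c_j = 0). Let Λ_{D'} = {x ∈ ℤⁿ : Hx ≡ 0 (mod q^a)}, where H is the r_a × n integer matrix whose j-th row equals q^i·σ(h_j) for r_i < j ≤ r_{i+1} (0 ≤ i ≤ a−1, r_0 := 0). Then Λ_{D'} is a finite-index subgroup of ℤⁿ with index [ℤⁿ : Λ_{D'}] = q^{r_1 + r_2 + … + r_a}. -/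
/-- The Construction D' lattice as an additive subgroup of `ℤⁿ`: the set of `x ∈ ℤⁿ`
with `Hx ≡ 0 (mod q^a)`, where the `j`-th row of `H` is `q^i · σ(h j)` for
`r i < j ≤ r (i+1)`. -/
def lambdaDprimeSub (q a n : ℕ) (r : ℕ → ℕ) (h : ℕ → Fin n → ZMod q) :
    AddSubgroup (Fin n → ℤ) where
  carrier := {x | ∀ i < a, ∀ j, r i < j → j ≤ r (i + 1) →
    ((q : ℤ) ^ a) ∣ (q : ℤ) ^ i * ∑ k, (((h j) k).val : ℤ) * x k}
  zero_mem' := by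
    intro i hi j hj1 hj2
    simp
  add_mem' := by
    intro x y hx hy i hi j hj1 hj2
    have hsum : (q : ℤ) ^ i * ∑ k, (((h j) k).val : ℤ) * (x + y) k
        = ((q : ℤ) ^ i * ∑ k, (((h j) k).val : ℤ) * x k)
          + ((q : ℤ) ^ i * ∑ k, (((h j) k).val : ℤ) * y k) := by
      simp only [Pi.add_apply, mul_add, Finset.sum_add_distrib]
    rw [hsum]
    exact dvd_add (hx i hi j hj1 hj2) (hy i hi j hj1 hj2)
  neg_mem' := by
    intro x hx i hi j hj1 hj2
    have hsum : (q : ℤ) ^ i * ∑ k, (((h j) k).val : ℤ) * (-x) k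
        = -((q : ℤ) ^ i * ∑ k, (((h j) k).val : ℤ) * x k) := by
      simp only [Pi.neg_apply, mul_neg, Finset.sum_neg_distrib]
    rw [hsum]
    exact dvd_neg.mpr (hx i hi j hj1 hj2)



/-- If a proper additive subgroup of `ZMod q`, then some nonzero `c` annihilates it. -/
lemma auxAnn (q : ℕ) (hq : 2 ≤ q) (R : AddSubgroup (ZMod q))
    (hR : R ≠ ⊤) : ∃ c : ZMod q, c ≠ 0 ∧ ∀ y ∈ R, c * y = 0 := by
  haveI : NeZero q := ⟨by omega⟩
  set t := Nat.card R with ht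
  have htdvd : t ∣ q := by
    have := AddSubgroup.card_addSubgroup_dvd_card R
    rwa [Nat.card_zmod] at this
  have htne : t ≠ q := by
    intro hEq
    exact hR (AddSubgroup.eq_top_of_card_eq R (by rw [← ht, hEq, Nat.card_zmod]))
  have htpos : 0 < t := Nat.card_pos
  have htlt : t < q := lt_of_le_of_ne (Nat.le_of_dvd (by omega) htdvd) htne
  refine ⟨(t : ZMod q), ?_, ?_⟩
  · rw [Ne, ZMod.natCast_eq_zero_iff]
    intro hd
    have := Nat.le_of_dvd htpos hd
    omega
  · intro y hy
    have h1 : t • (⟨y, hy⟩ : R) = 0 := card_nsmul_eq_zero'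
    have h2 : t • y = 0 := by
      have := congrArg (Subtype.val) h1
      simpa using this
    rwa [nsmul_eq_mul] at h2



lemma auxSurjFin (q n : ℕ) (hq : 2 ≤ q) :
    ∀ (m : ℕ) (v : Fin m → Fin n → ZMod q),
    (∀ c : Fin m → ZMod q, ∑ j, c j • v j = 0 → ∀ j, c j = 0) →
    ∀ u : Fin m → ZMod q, ∃ x : Fin n → ZMod q, ∀ j, ∑ k, v j k * x k = u j := by
  intro m
  induction m with
  | zero => exact fun v _ u => ⟨0, fun j => j.elim0⟩
  | succ m ih =>
    intro v hindep u
    haveI : NeZero q := ⟨by omega⟩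
    set v' : Fin m → Fin n → ZMod q := fun j => v j.castSucc with hv'
    have hindep' : ∀ c : Fin m → ZMod q, ∑ j, c j • v' j = 0 → ∀ j, c j = 0 := by
      intro c hc j
      have h0 : ∑ j : Fin (m+1), (Fin.snoc c (0 : ZMod q) : Fin (m+1) → ZMod q) j • v j = 0 := by
        rw [Fin.sum_univ_castSucc]
        simpa [hv'] using hc
      have := hindep _ h0 j.castSucc
      simpa using this
    choose w hw using fun j0 : Fin m => ih v' hindep' (Pi.single j0 1)
    set f : (Fin n → ZMod q) → ZMod q := fun x => ∑ k, v (Fin.last m) k * x k with hf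
    have hfadd : ∀ x y, f (x + y) = f x + f y := by
      intro x y
      simp [hf, mul_add, Finset.sum_add_distrib]
    have hfneg : ∀ x, f (-x) = - f x := by
      intro x
      simp [hf, mul_neg, Finset.sum_neg_distrib]
    set R : AddSubgroup (ZMod q) :=
      { carrier := {y | ∃ x : Fin n → ZMod q,
          (∀ j : Fin m, ∑ k, v' j k * x k = 0) ∧ f x = y}
        zero_mem' := ⟨0, by simp, by simp [hf]⟩
        add_mem' := by
          rintro y z ⟨x, hx1, rfl⟩ ⟨x', hx'1, rfl⟩
          exact ⟨x + x', by intro j; simp [Pi.add_apply, mul_add, Finset.sum_add_distrib,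
            hx1 j, hx'1 j], hfadd x x'⟩
        neg_mem' := by
          rintro y ⟨x, hx1, rfl⟩
          exact ⟨-x, by intro j; simp [Pi.neg_apply, mul_neg, Finset.sum_neg_distrib, hx1 j],
            hfneg x⟩ } with hR
    have hRtop : R = ⊤ := by
      by_contra hRne
      obtain ⟨c, hc0, hcann⟩ := auxAnn q hq R hRne
      set d : Fin m → ZMod q := fun j => c * f (w j) with hd
      have key : ∀ x : Fin n → ZMod q,
          c * f x = ∑ j, (∑ k, v' j k * x k) * d j := by
        intro x
        set t : Fin m → ZMod q := fun j => ∑ k, v' j k * x k with htt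
        set x' : Fin n → ZMod q := fun k => x k - ∑ j, t j * w j k with hx'
        have hx'K : ∀ j0, ∑ k, v' j0 k * x' k = 0 := by
          intro j0
          have e1 : ∑ k, v' j0 k * x' k
              = (∑ k, v' j0 k * x k) - ∑ j, t j * (∑ k, v' j0 k * w j k) := by
            simp only [hx', mul_sub, Finset.sum_sub_distrib]
            congr 1
            calc ∑ k, v' j0 k * ∑ j, t j * w j k
                = ∑ k, ∑ j, t j * (v' j0 k * w j k) := by
                  refine Finset.sum_congr rfl fun k _ => ?_
                  rw [Finset.mul_sum]
                  exact Finset.sum_congr rfl fun j _ => by ring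
              _ = ∑ j, ∑ k, t j * (v' j0 k * w j k) := Finset.sum_comm
              _ = ∑ j, t j * ∑ k, v' j0 k * w j k := by
                  exact Finset.sum_congr rfl fun j _ => by rw [Finset.mul_sum]
          rw [e1]
          have e2 : ∑ j, t j * (∑ k, v' j0 k * w j k) = t j0 := by
            rw [Finset.sum_eq_single j0 ?_ ?_]
            · rw [hw j0 j0]; simp
            · intro b _ hb
              rw [hw b j0]
              simp [Pi.single_apply, hb]
            · intro hb; simp at hb
          rw [e2]
          simp [htt]
        have hmem : f x' ∈ R := ⟨x', hx'K, rfl⟩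
        have h0 : c * f x' = 0 := hcann _ hmem
        have e3 : f x' = f x - ∑ j, t j * f (w j) := by
          simp only [hx', hf, mul_sub, Finset.sum_sub_distrib]
          congr 1
          calc ∑ k, v (Fin.last m) k * ∑ j, t j * w j k
              = ∑ k, ∑ j, t j * (v (Fin.last m) k * w j k) := by
                refine Finset.sum_congr rfl fun k _ => ?_
                rw [Finset.mul_sum]
                exact Finset.sum_congr rfl fun j _ => by ring
            _ = ∑ j, ∑ k, t j * (v (Fin.last m) k * w j k) := Finset.sum_comm
            _ = ∑ j, t j * ∑ k, v (Fin.last m) k * w j k := by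
                exact Finset.sum_congr rfl fun j _ => by rw [Finset.mul_sum]
        rw [e3, mul_sub, sub_eq_zero] at h0
        rw [h0, Finset.mul_sum]
        congr 1; funext j
        simp only [hd, htt]
        ring
      have hvec : ∑ j : Fin (m+1),
          (Fin.snoc (fun j : Fin m => -(d j)) c : Fin (m+1) → ZMod q) j • v j = 0 := by
        funext k0
        have hkey := key (Pi.single k0 1)
        have e4 : f (Pi.single k0 1) = v (Fin.last m) k0 := by
          simp only [hf]
          rw [Finset.sum_eq_single k0 (by intro b _ hb; simp [Pi.single_apply, hb])
            (by intro hb; simp at hb)]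
          simp
        have e5 : ∀ j, (∑ k, v' j k * (Pi.single k0 1 : Fin n → ZMod q) k) = v' j k0 := by
          intro j
          rw [Finset.sum_eq_single k0 (by intro b _ hb; simp [Pi.single_apply, hb])
            (by intro hb; simp at hb)]
          simp
        rw [e4] at hkey
        simp only [e5] at hkey
        rw [Fin.sum_univ_castSucc]
        simp only [Pi.add_apply, Finset.sum_apply, Pi.smul_apply, smul_eq_mul,
          Fin.snoc_castSucc, Fin.snoc_last, Pi.zero_apply]
        rw [hkey]
        simp only [neg_mul]
        rw [← Finset.sum_add_distrib]
        apply Finset.sum_eq_zero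
        intro j _
        simp only [hv']
        ring
      have := hindep _ hvec (Fin.last m)
      rw [Fin.snoc_last] at this
      exact hc0 this
    obtain ⟨x₀, hx₀⟩ := ih v' hindep' (fun j => u j.castSucc)
    have hmem : u (Fin.last m) - f x₀ ∈ R := by rw [hRtop]; trivial
    obtain ⟨xk, hxkK, hxkf⟩ := hmem
    refine ⟨x₀ + xk, ?_⟩
    intro j
    refine Fin.lastCases ?_ ?_ j
    · have : ∑ k, v (Fin.last m) k * (x₀ + xk) k = f x₀ + f xk := by
        simp [hf, Pi.add_apply, mul_add, Finset.sum_add_distrib]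
      rw [this, hxkf]
      ring
    · intro j
      have : ∑ k, v j.castSucc k * (x₀ + xk) k
          = (∑ k, v' j k * x₀ k) + (∑ k, v' j k * xk k) := by
        simp [hv', Pi.add_apply, mul_add, Finset.sum_add_distrib]
      rw [this, hx₀ j, hxkK j, add_zero]



lemma auxSurj (q n : ℕ) (hq : 2 ≤ q) {J : Type} [Fintype J]
    (v : J → Fin n → ZMod q)
    (hindep : ∀ c : J → ZMod q, ∑ j, c j • v j = 0 → ∀ j, c j = 0)
    (u : J → ZMod q) : ∃ x : Fin n → ZMod q, ∀ j, ∑ k, v j k * x k = u j := by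
  classical
  let e := Fintype.equivFin J
  have hindep' : ∀ c : Fin (Fintype.card J) → ZMod q,
      ∑ j', c j' • v (e.symm j') = 0 → ∀ j', c j' = 0 := by
    intro c hc j'
    have hsum : ∑ j : J, c (e j) • v j = 0 := by
      rw [← hc]
      exact Fintype.sum_equiv e _ _ (fun j => by simp)
    have := hindep (fun j => c (e j)) hsum (e.symm j')
    simpa using this
  obtain ⟨x, hx⟩ := auxSurjFin q n hq (Fintype.card J) (fun j' => v (e.symm j'))
    hindep' (fun j' => u (e.symm j'))
  refine ⟨x, fun j => ?_⟩
  have := hx (e j)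
  simpa using this

lemma auxDivide (q N : ℕ) (hq : 2 ≤ q) (hqN : q ∣ N) [NeZero N] (y : ZMod N)
    (hy : ZMod.castHom hqN (ZMod q) y = 0) : ∃ w : ZMod N, y = (q : ZMod N) * w := by
  have h1 : ((y.val : ℕ) : ZMod q) = 0 := by
    rwa [ZMod.natCast_val, ← ZMod.castHom_apply (h := hqN)]
  rw [ZMod.natCast_eq_zero_iff] at h1
  refine ⟨((y.val / q : ℕ) : ZMod N), ?_⟩
  rw [← Nat.cast_mul, Nat.mul_div_cancel' h1, ZMod.natCast_val, ZMod.cast_id]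

lemma auxLift (q a n : ℕ) (hq : 2 ≤ q) {P : Type} [Fintype P]
    (d : P → ℕ) (hd1 : ∀ p, 1 ≤ d p) (hda : ∀ p, d p ≤ a)
    (φ : (Fin n → ℤ) →+ (∀ p, ZMod (q ^ d p)))
    (hmod : ∀ u : P → ZMod q, ∃ x, ∀ p,
      (ZMod.castHom (dvd_pow_self q (Nat.one_le_iff_ne_zero.mp (hd1 p))) (ZMod q)) (φ x p) = u p) :
    Function.Surjective φ := by
  haveI : NeZero q := ⟨by omega⟩
  haveI hnz : ∀ p : P, NeZero (q ^ d p) := fun p => ⟨pow_ne_zero _ (by omega)⟩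
  have step : ∀ z : (∀ p, ZMod (q ^ d p)), ∃ y w, z = φ y + q • w := by
    intro z
    obtain ⟨x, hx⟩ := hmod (fun p =>
      ZMod.castHom (dvd_pow_self q (Nat.one_le_iff_ne_zero.mp (hd1 p))) (ZMod q) (z p))
    have hz : ∀ p, ∃ wp : ZMod (q ^ d p), z p - φ x p = (q : ZMod (q ^ d p)) * wp := by
      intro p
      apply auxDivide q _ hq _ _
      rw [map_sub, hx p, sub_self]
    choose w hwp using hz
    refine ⟨x, w, ?_⟩
    funext p
    have := hwp p
    have hq' : (q • w) p = (q : ZMod (q ^ d p)) * w p := by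
      simp [nsmul_eq_mul]
    rw [Pi.add_apply, hq']
    linear_combination this
  have main : ∀ s : ℕ, ∀ t : (∀ p, ZMod (q ^ d p)), ∃ x w, t = φ x + q ^ s • w := by
    intro s
    induction s with
    | zero => exact fun t => ⟨0, t, by simp⟩
    | succ s ihs =>
      intro t
      obtain ⟨x, w, hw⟩ := ihs t
      obtain ⟨y, w', hw'⟩ := step w
      refine ⟨x + q ^ s • y, w', ?_⟩
      rw [hw, hw', map_add, AddMonoidHom.map_nsmul]
      rw [smul_add, add_assoc, smul_smul, pow_succ]
  intro t
  obtain ⟨x, w, hw⟩ := main a t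
  refine ⟨x, ?_⟩
  rw [hw]
  have : (q ^ a • w : ∀ p, ZMod (q ^ d p)) = 0 := by
    funext p
    have h1 : ((q ^ a : ℕ) : ZMod (q ^ d p)) = 0 := by
      rw [ZMod.natCast_eq_zero_iff]
      exact pow_dvd_pow q (hda p)
    simp [nsmul_eq_mul, h1]
  rw [this, add_zero]


lemma auxChain (r : ℕ → ℕ) : ∀ t : ℕ, (∀ i < t, r i ≤ r (i + 1)) → ∀ s ≤ t, r s ≤ r t := by
  intro t
  induction t with
  | zero =>
    intro _ s hs
    have : s = 0 := by omega
    rw [this]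
  | succ t iht =>
    intro hm s hs
    rcases Nat.eq_or_lt_of_le hs with h | h
    · rw [h]
    · have h1 : r s ≤ r t := iht (fun i hi => hm i (by omega)) s (by omega)
      have h2 : r t ≤ r (t + 1) := hm t (by omega)
      omega

lemma auxCross (r : ℕ → ℕ) : ∀ b : ℕ, ∀ j, r 0 < j → j ≤ r b →
    ∃ i, i < b ∧ r i < j ∧ j ≤ r (i + 1) := by
  intro b
  induction b with
  | zero => intro j h1 h2; omega
  | succ b ihb =>
    intro j h1 h2
    by_cases hc : j ≤ r b
    · obtain ⟨i, hi⟩ := ihb j h1 hc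
      exact ⟨i, by omega, hi.2⟩
    · exact ⟨b, by omega, by omega, h2⟩

lemma auxTele (r : ℕ → ℕ) : ∀ b : ℕ, (∀ i < b, r i ≤ r (i + 1)) →
    ∑ i ∈ Finset.range b, (r (i + 1) - r i) = r b - r 0 := by
  intro b
  induction b with
  | zero => simp
  | succ b ihb =>
    intro hm
    rw [Finset.sum_range_succ, ihb (fun i hi => hm i (by omega))]
    have h1 : r 0 ≤ r b := auxChain r b (fun i hi => hm i (by omega)) 0 (by omega)
    have h2 : r b ≤ r (b + 1) := hm b (by omega)
    omega

lemma auxAbel (r : ℕ → ℕ) (hr0 : r 0 = 0) : ∀ a : ℕ, (∀ i < a, r i ≤ r (i + 1)) →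
    ∑ i ∈ Finset.range a, (r (i + 1) - r i) * (a - i) = ∑ ℓ ∈ Finset.Icc 1 a, r ℓ := by
  intro a
  induction a with
  | zero => simp
  | succ a iha =>
    intro hm
    have e1 : ∑ i ∈ Finset.range (a + 1), (r (i + 1) - r i) * (a + 1 - i)
        = ∑ i ∈ Finset.range (a + 1), ((r (i + 1) - r i) * (a - i) + (r (i + 1) - r i)) := by
      refine Finset.sum_congr rfl fun i hi => ?_
      rw [Finset.mem_range] at hi
      have : a + 1 - i = (a - i) + 1 := by omega
      rw [this, Nat.mul_add, Nat.mul_one]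
    rw [e1, Finset.sum_add_distrib, auxTele r (a + 1) hm, Finset.sum_range_succ,
      Nat.sub_self, Nat.mul_zero, add_zero,
      iha (fun i hi => hm i (by omega)), Finset.sum_Icc_succ_top (by omega)]
    omega







abbrev auxP (a : ℕ) (r : ℕ → ℕ) : Type :=
  (i : Fin a) × {j : ℕ // j ∈ Finset.Ioc (r i.1) (r (i.1 + 1))}

/-- The syndrome homomorphism. -/
def auxPhi (q a n : ℕ) (r : ℕ → ℕ) (h : ℕ → Fin n → ZMod q) :
    (Fin n → ℤ) →+ ∀ p : auxP a r, ZMod (q ^ (a - p.1.1)) where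
  toFun := fun x p => ((∑ k, (((h p.2.1) k).val : ℤ) * x k : ℤ) : ZMod (q ^ (a - p.1.1)))
  map_zero' := by funext p; simp
  map_add' := by
    intro x y
    funext p
    rw [Pi.add_apply, ← Int.cast_add]
    congr 1
    simp only [Pi.add_apply, mul_add, Finset.sum_add_distrib]

/-- If `h 1, …, h (r a)` are linearly independent over `ℤ_q`, then the
Construction D' lattice has finite index in `ℤⁿ` equal to `q^{r_1 + r_2 + ⋯ + r_a}`. -/
theorem index_lambdaDprime_of_linearIndependent
    (q a n : ℕ) (hq : 2 ≤ q) (ha : 1 ≤ a)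
    (r : ℕ → ℕ) (hr0 : r 0 = 0) (hrmono : ∀ i < a, r i ≤ r (i + 1))
    (h : ℕ → Fin n → ZMod q)
    (hli : ∀ c : ℕ → ZMod q,
      (∑ j ∈ Finset.Icc 1 (r a), c j • h j) = 0 → ∀ j ∈ Finset.Icc 1 (r a), c j = 0) :
    (lambdaDprimeSub q a n r h).index ≠ 0 ∧
    (lambdaDprimeSub q a n r h).index = q ^ (∑ ℓ ∈ Finset.Icc 1 a, r ℓ) := by
  classical
  haveI : NeZero q := ⟨by omega⟩
  have rchain : ∀ s t, s ≤ t → t ≤ a → r s ≤ r t := fun s t hst hta =>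
    auxChain r t (fun i hi => hrmono i (by omega)) s hst
  set φ := auxPhi q a n r h with hφ
  -- uniqueness of blocks
  have huniq : ∀ p p' : auxP a r, p.2.1 = p'.2.1 → p = p' := by
    rintro ⟨⟨i, hia⟩, ⟨j, hj⟩⟩ ⟨⟨i', hia'⟩, ⟨j', hj'⟩⟩ hEq
    simp only at hEq
    subst hEq
    rw [Finset.mem_Ioc] at hj hj'
    replace hj : r i < j ∧ j ≤ r (i + 1) := hj
    replace hj' : r i' < j ∧ j ≤ r (i' + 1) := hj'
    have hii : i = i' := by
      by_contra hne
      rcases Nat.lt_or_ge i i' with hlt | hge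
      · have := rchain (i + 1) i' (by omega) (by omega); omega
      · have hlt : i' < i := by omega
        have := rchain (i' + 1) i (by omega) (by omega); omega
    subst hii
    rfl
  -- linear independence over the sigma index
  have hindepP : ∀ c : auxP a r → ZMod q,
      ∑ p, c p • h p.2.1 = 0 → ∀ p, c p = 0 := by
    intro c hc p
    set c' : ℕ → ZMod q :=
      fun j => if hj : ∃ p : auxP a r, p.2.1 = j then c hj.choose else 0 with hc'
    have hc'p : ∀ p : auxP a r, c' p.2.1 = c p := by
      intro p
      have hj : ∃ p' : auxP a r, p'.2.1 = p.2.1 := ⟨p, rfl⟩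
      simp only [hc', dif_pos hj]
      congr 1
      exact huniq _ _ hj.choose_spec
    have hIcc : Finset.Icc 1 (r a)
        = (Finset.range a).biUnion (fun i => Finset.Ioc (r i) (r (i + 1))) := by
      ext j
      simp only [Finset.mem_Icc, Finset.mem_biUnion, Finset.mem_range, Finset.mem_Ioc]
      constructor
      · rintro ⟨h1, h2⟩
        obtain ⟨i, hi1, hi2, hi3⟩ := auxCross r a j (by omega) h2
        exact ⟨i, hi1, hi2, hi3⟩
      · rintro ⟨i, hia, hij1, hij2⟩
        have h1 : r 0 ≤ r i := rchain 0 i (by omega) (by omega)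
        have h2 : r (i + 1) ≤ r a := rchain (i + 1) a (by omega) (by omega)
        omega
    have hdisj : ∀ i1 ∈ Finset.range a, ∀ i2 ∈ Finset.range a, i1 ≠ i2 →
        Disjoint (Finset.Ioc (r i1) (r (i1 + 1))) (Finset.Ioc (r i2) (r (i2 + 1))) := by
      intro i1 h1 i2 h2 hne
      rw [Finset.mem_range] at h1 h2
      rw [Finset.disjoint_left]
      intro j hj1 hj2
      rw [Finset.mem_Ioc] at hj1 hj2
      rcases Nat.lt_or_ge i1 i2 with hlt | hge
      · have := rchain (i1 + 1) i2 (by omega) (by omega); omega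
      · have hlt : i2 < i1 := by omega
        have := rchain (i2 + 1) i1 (by omega) (by omega); omega
    have hsum : ∑ j ∈ Finset.Icc 1 (r a), c' j • h j = ∑ p : auxP a r, c p • h p.2.1 := by
      rw [hIcc, Finset.sum_biUnion hdisj, Finset.sum_range
        (fun i => ∑ j ∈ Finset.Ioc (r i) (r (i + 1)), c' j • h j)]
      rw [← Finset.univ_sigma_univ, Finset.sum_sigma]
      refine Finset.sum_congr rfl fun i _ => ?_
      rw [← Finset.sum_attach (Finset.Ioc (r i.1) (r (i.1 + 1))) (fun j => c' j • h j),
        Finset.univ_eq_attach]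
      refine Finset.sum_congr rfl fun j' _ => ?_
      rw [hc'p ⟨i, j'⟩]
    have hz : ∑ j ∈ Finset.Icc 1 (r a), c' j • h j = 0 := by rw [hsum]; exact hc
    have hmem : p.2.1 ∈ Finset.Icc 1 (r a) := by
      have h2 := p.2.2
      rw [Finset.mem_Ioc] at h2
      rw [Finset.mem_Icc]
      have h3 := rchain (p.1.1 + 1) a (by omega) (by have := p.1.2; omega)
      omega
    rw [← hc'p p]
    exact hli c' hz p.2.1 hmem
  -- surjectivity of φ
  have hsurj : Function.Surjective φ := by
    refine auxLift q a n hq (fun p : auxP a r => a - p.1.1)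
      (fun p => ?_) (fun p => ?_) φ ?_
    · show 1 ≤ a - p.1.1
      have h2 : p.1.1 < a := p.1.2
      omega
    · show a - p.1.1 ≤ a
      omega
    intro u
    obtain ⟨xb, hxb⟩ := auxSurj q n hq (fun p : auxP a r => h p.2.1) hindepP u
    refine ⟨fun k => ((xb k).val : ℤ), fun p => ?_⟩
    have e0 : φ (fun k => ((xb k).val : ℤ)) p
        = ((∑ k, (((h p.2.1) k).val : ℤ) * ((xb k).val : ℤ) : ℤ) : ZMod (q ^ (a - p.1.1))) := rfl
    rw [e0, map_intCast]
    have : ((∑ k, (((h p.2.1) k).val : ℤ) * ((xb k).val : ℤ) : ℤ) : ZMod q)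
        = ∑ k, h p.2.1 k * xb k := by
      push_cast
      simp [ZMod.natCast_val, ZMod.cast_id]
    rw [this]
    exact hxb p
  -- kernel identification
  have hker : lambdaDprimeSub q a n r h = φ.ker := by
    ext x
    have hqz : (q : ℤ) ≠ 0 := by exact_mod_cast (by omega : q ≠ 0)
    constructor
    · intro hx
      rw [AddMonoidHom.mem_ker]
      funext p
      obtain ⟨⟨i, hia⟩, ⟨j, hj⟩⟩ := p
      rw [Finset.mem_Ioc] at hj
      have hdvd := hx i hia j hj.1 hj.2
      show ((∑ k, (((h j) k).val : ℤ) * x k : ℤ) : ZMod (q ^ (a - i))) = 0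
      rw [ZMod.intCast_zmod_eq_zero_iff_dvd]
      have e : ((q ^ (a - i) : ℕ) : ℤ) = (q : ℤ) ^ (a - i) := by push_cast; ring
      rw [e]
      have hfac : (q : ℤ) ^ a = (q : ℤ) ^ i * (q : ℤ) ^ (a - i) := by
        rw [← pow_add]; congr 1; omega
      rw [hfac] at hdvd
      exact (mul_dvd_mul_iff_left (pow_ne_zero i hqz)).mp hdvd
    · intro hx i hia j hj1 hj2
      rw [AddMonoidHom.mem_ker] at hx
      have h0 := congrFun hx ⟨⟨i, hia⟩, ⟨j, Finset.mem_Ioc.mpr ⟨hj1, hj2⟩⟩⟩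
      have h1 : ((∑ k, (((h j) k).val : ℤ) * x k : ℤ) : ZMod (q ^ (a - i))) = 0 := h0
      rw [ZMod.intCast_zmod_eq_zero_iff_dvd] at h1
      have e : ((q ^ (a - i) : ℕ) : ℤ) = (q : ℤ) ^ (a - i) := by push_cast; ring
      rw [e] at h1
      have hfac : (q : ℤ) ^ a = (q : ℤ) ^ i * (q : ℤ) ^ (a - i) := by
        rw [← pow_add]; congr 1; omega
      rw [hfac]
      exact mul_dvd_mul_left _ h1
  -- index computation
  have hidx : (lambdaDprimeSub q a n r h).index
      = Nat.card (∀ p : auxP a r, ZMod (q ^ (a - p.1.1))) := by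
    rw [hker, AddSubgroup.index_ker, AddMonoidHom.range_eq_top.mpr hsurj,
      AddSubgroup.card_top]
  have hcard : Nat.card (∀ p : auxP a r, ZMod (q ^ (a - p.1.1)))
      = q ^ (∑ ℓ ∈ Finset.Icc 1 a, r ℓ) := by
    rw [Nat.card_pi]
    rw [Finset.prod_congr rfl (fun p _ => Nat.card_zmod (q ^ (a - p.1.1)))]
    rw [Finset.prod_pow_eq_pow_sum]
    congr 1
    rw [← Finset.univ_sigma_univ, Finset.sum_sigma]
    have e2 : ∀ i : Fin a, (∑ _j' : {j // j ∈ Finset.Ioc (r i.1) (r (i.1 + 1))}, (a - i.1))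
        = (r (i.1 + 1) - r i.1) * (a - i.1) := by
      intro i
      rw [Finset.sum_const, Finset.card_univ, Fintype.card_coe, Nat.card_Ioc, smul_eq_mul]
    rw [Finset.sum_congr rfl (fun i _ => e2 i)]
    rw [← Finset.sum_range (fun i => (r (i + 1) - r i) * (a - i))]
    exact auxAbel r hr0 a hrmono
  constructor
  · rw [hidx, hcard]
    positivity
  · rw [hidx, hcard]
end

section
/- Let a ≥ 1, let {0} ⊊ C_a ⊆ … ⊆ C_1 ⊊ ℤ_2ⁿ be nested binary linear codes, let 0 ≤ r_1 ≤ … ≤ r_a and h_1,…,h_{r_a} ∈ ℤ_2ⁿ be such that C_ℓ⊥ = ⟨h_1,…,h_{r_ℓ}⟩ for each ℓ = 1,…,a, and let Λ_{D'} = {x ∈ ℤⁿ : x·σ(h_j) ≡ 0 (mod 2^{i+1}) for all pairs (i,j) with 0 ≤ i < a and r_{a−i−1} < j ≤ r_{a−i}}, where r_0 := 0. Then for every real 1 ≤ P < ∞ the L_P minimum distance of Λ_{D'} satisfies min{2^a, 2^{a−1}·d_P(C_1), 2^{a−2}·d_P(C_2), …, d_P(C_a)} ≤ d_P(Λ_{D'})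 ≤ 2^a, where d_P(C_ℓ) is the P-Lee minimum distance of C_ℓ (equal to the P-th root of the minimum Hamming distance for binary codes). -/
/-- The `P`-Lee minimum distance of a code `C ⊆ (ℤ/q)ⁿ`. -/
noncomputable def codeDistP (q n : ℕ) (P : ℝ) (C : Set (Fin n → ZMod q)) : ℝ :=
  sInf {d : ℝ | ∃ x ∈ C, ∃ y ∈ C, x ≠ y ∧
    d = (∑ i, ((min ((x i - y i).val) (q - (x i - y i).val) : ℕ) : ℝ) ^ P) ^ (1 / P)}

/-- The `L_P` minimum distance of a subset of `ℤⁿ`. -/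
noncomputable def lpDistInt (n : ℕ) (P : ℝ) (S : Set (Fin n → ℤ)) : ℝ :=
  sInf {d : ℝ | ∃ x ∈ S, ∃ y ∈ S, x ≠ y ∧
    d = (∑ i, |((x i - y i : ℤ) : ℝ)| ^ P) ^ (1 / P)}

/-- The dual code of a subset of `(ℤ/q)ⁿ`. -/
def dualCode (q n : ℕ) (C : Set (Fin n → ZMod q)) : Set (Fin n → ZMod q) :=
  {x | ∀ y ∈ C, ∑ i, x i * y i = 0}

/-- The Construction D' lattice: `x ∈ ℤⁿ` with `x · σ(h j) ≡ 0 (mod q^(i+1))`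
for all `0 ≤ i < a` and `r (a-i-1) < j ≤ r (a-i)`. -/
def lambdaDprime (q a n : ℕ) (r : ℕ → ℕ) (h : ℕ → Fin n → ZMod q) :
    Set (Fin n → ℤ) :=
  {x | ∀ i < a, ∀ j, r (a - i - 1) < j → j ≤ r (a - i) →
    ((q : ℤ) ^ (i + 1)) ∣ ∑ k, x k * (((h j) k).val : ℤ)}

lemma mem_of_orth_dual {n : ℕ} (C : Submodule (ZMod 2) (Fin n → ZMod 2))
    (z : Fin n → ZMod 2)
    (hz : ∀ x ∈ dualCode 2 n (C : Set (Fin n → ZMod 2)), ∑ i, x i * z i = 0) :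
    z ∈ C := by
  by_contra hzC
  obtain ⟨f, hf1, hf2⟩ := C.exists_dual_map_eq_bot_of_notMem hzC inferInstance
  set x : Fin n → ZMod 2 := fun i => f (Pi.single i 1) with hxdef
  have hfy : ∀ y : Fin n → ZMod 2, f y = ∑ i, x i * y i := by
    intro y
    have hy : y = ∑ i, (y i) • Pi.single i (1 : ZMod 2) := by
      ext j; simp [Pi.single_apply]
    conv_lhs => rw [hy]
    rw [map_sum]
    simp [hxdef, mul_comm]
  have hx : x ∈ dualCode 2 n (C : Set (Fin n → ZMod 2)) := by
    intro y hy
    rw [← hfy y]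
    have hmem : f y ∈ C.map f := Submodule.mem_map_of_mem hy
    rw [hf2] at hmem; simpa using hmem
  have h0 := hz x hx
  rw [← hfy z] at h0
  exact hf1 h0

lemma mem_of_orth_span {n : ℕ} (C : Submodule (ZMod 2) (Fin n → ZMod 2))
    (s : Set (Fin n → ZMod 2))
    (hgen : dualCode 2 n (C : Set (Fin n → ZMod 2))
      = (Submodule.span (ZMod 2) s : Set (Fin n → ZMod 2)))
    (z : Fin n → ZMod 2)
    (hz : ∀ g ∈ s, ∑ i, z i * g i = 0) : z ∈ C := by
  apply mem_of_orth_dual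
  intro x hx
  rw [hgen] at hx
  have hx' : x ∈ Submodule.span (ZMod 2) s := hx
  refine Submodule.span_induction (p := fun x _ => ∑ i, x i * z i = 0) ?_ ?_ ?_ ?_ hx'
  · intro g hg; rw [← hz g hg]; exact Finset.sum_congr rfl fun i _ => mul_comm _ _
  · simp
  · intro u v _ _ hu hv; simp [Pi.add_apply, add_mul, Finset.sum_add_distrib, hu, hv]
  · intro c u _ hu; simp [Pi.smul_apply, smul_mul_assoc, smul_eq_mul, mul_assoc, ← Finset.mul_sum, hu]

/-- For nested binary codes `{0} ⊊ C_a ⊆ ⋯ ⊆ C_1 ⊊ ℤ_2ⁿ` and any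
`1 ≤ P < ∞`, the `L_P` minimum distance of the Construction D' lattice satisfies
`min{2^a, 2^{a-1}d_P(C_1), …, d_P(C_a)} ≤ d_P(Λ_{D'}) ≤ 2^a`. -/
theorem lpDist_lambdaDprime_binary_bounds
    (a n : ℕ) (ha : 1 ≤ a)
    (C : ℕ → Submodule (ZMod 2) (Fin n → ZMod 2))
    (hnested : ∀ ℓ, 1 ≤ ℓ → ℓ < a → C (ℓ + 1) ≤ C ℓ)
    (hCa : C a ≠ ⊥) (hC1 : C 1 ≠ ⊤)
    (r : ℕ → ℕ) (hr0 : r 0 = 0) (hrmono : ∀ ℓ < a, r ℓ ≤ r (ℓ + 1))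
    (h : ℕ → Fin n → ZMod 2)
    (hgen : ∀ ℓ, 1 ≤ ℓ → ℓ ≤ a →
      dualCode 2 n (C ℓ : Set (Fin n → ZMod 2))
        = (Submodule.span (ZMod 2) (h '' {j | 1 ≤ j ∧ j ≤ r ℓ}) : Set (Fin n → ZMod 2)))
    (P : ℝ) (hP : 1 ≤ P) :
    sInf (insert ((2 : ℝ) ^ a)
        {d : ℝ | ∃ ℓ ∈ Finset.Icc 1 a,
          d = (2 : ℝ) ^ (a - ℓ) * codeDistP 2 n P (C ℓ : Set (Fin n → ZMod 2))})
      ≤ lpDistInt n P (lambdaDprime 2 a n r h) ∧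
    lpDistInt n P (lambdaDprime 2 a n r h) ≤ (2 : ℝ) ^ a := by
  classical
  have hP0 : (0:ℝ) < P := lt_of_lt_of_le one_pos hP
  have hP0' : P ≠ 0 := ne_of_gt hP0
  obtain ⟨z0, hz0C, hz0⟩ := Submodule.exists_mem_ne_zero_of_ne_bot hCa
  obtain ⟨i0, hi0⟩ : ∃ i, z0 i ≠ 0 := by
    by_contra hc; push_neg at hc; exact hz0 (funext hc)
  set T := {d : ℝ | ∃ x ∈ lambdaDprime 2 a n r h, ∃ y ∈ lambdaDprime 2 a n r h, x ≠ y ∧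
    d = (∑ i, |((x i - y i : ℤ) : ℝ)| ^ P) ^ (1 / P)} with hTdef
  have hLP : lpDistInt n P (lambdaDprime 2 a n r h) = sInf T := rfl
  have hTbdd : BddBelow T := by
    refine ⟨0, ?_⟩
    rintro d ⟨x, _, y, _, _, rfl⟩
    positivity
  -- upper bound witness
  set u : Fin n → ℤ := fun i => if i = i0 then 2^a else 0 with hu
  have hu_mem : u ∈ lambdaDprime 2 a n r h := by
    intro i hia j hj1 hj2
    have he : ∑ k, u k * ((h j k).val : ℤ) = 2^a * ((h j i0).val : ℤ) := by
      rw [Finset.sum_eq_single i0]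
      · simp [hu]
      · intro b _ hb; simp [hu, hb]
      · intro hb; exact absurd (Finset.mem_univ i0) hb
    rw [he]
    exact Dvd.dvd.mul_right (pow_dvd_pow 2 (by omega)) _
  have h0_mem : (0 : Fin n → ℤ) ∈ lambdaDprime 2 a n r h := by
    intro i hia j hj1 hj2; simp
  have cancel : ∀ c : ℝ, 0 ≤ c → (c ^ P) ^ (1/P) = c := by
    intro c hc
    rw [← Real.rpow_mul hc, mul_one_div_cancel hP0', Real.rpow_one]
  have hnorm : (∑ i, |((u i - (0 : Fin n → ℤ) i : ℤ) : ℝ)| ^ P) ^ (1/P) = 2^a := by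
    have hterm : ∀ i : Fin n, |((u i - (0 : Fin n → ℤ) i : ℤ) : ℝ)| ^ P
        = if i = i0 then ((2:ℝ)^a)^P else 0 := by
      intro i
      by_cases hi : i = i0 <;>
        simp [hu, hi, Real.zero_rpow hP0', abs_of_nonneg, pow_nonneg]
    rw [Finset.sum_congr rfl (fun i _ => hterm i), Finset.sum_ite_eq' Finset.univ i0,
      if_pos (Finset.mem_univ i0)]
    exact cancel _ (by positivity)
  have hmemT : (2:ℝ)^a ∈ T := by
    refine ⟨u, hu_mem, 0, h0_mem, ?_, hnorm.symm⟩
    intro hc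
    have := congrFun hc i0
    simp [hu] at this
  have hupper : lpDistInt n P (lambdaDprime 2 a n r h) ≤ 2^a := by
    rw [hLP]; exact csInf_le hTbdd hmemT
  refine ⟨?_, hupper⟩
  -- lower bound
  set S := insert ((2:ℝ)^a) {d : ℝ | ∃ ℓ ∈ Finset.Icc 1 a,
      d = (2:ℝ)^(a-ℓ) * codeDistP 2 n P (C ℓ : Set (Fin n → ZMod 2))} with hSdef
  have hcd_nonneg : ∀ ℓ, 0 ≤ codeDistP 2 n P (C ℓ : Set (Fin n → ZMod 2)) := by
    intro ℓ
    apply Real.sInf_nonneg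
    rintro d ⟨x, _, y, _, _, rfl⟩
    positivity
  have hSbdd : BddBelow S := by
    refine ⟨0, ?_⟩
    rintro d (rfl | ⟨ℓ, _, rfl⟩)
    · positivity
    · exact mul_nonneg (by positivity) (hcd_nonneg ℓ)
  rw [hLP]
  apply le_csInf ⟨_, hmemT⟩
  rintro d ⟨x, hx, y, hy, hxy, rfl⟩
  have hv : (fun i => x i - y i) ∈ lambdaDprime 2 a n r h := by
    intro i hia j hj1 hj2
    have hd := dvd_sub (hx i hia j hj1 hj2) (hy i hia j hj1 hj2)
    simpa [sub_mul, Finset.sum_sub_distrib] using hd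
  by_cases hdvd : ∀ i, (2:ℤ)^a ∣ (x i - y i)
  · -- Case 1 : all coords divisible by 2^a
    obtain ⟨i1, hi1⟩ := Function.ne_iff.mp hxy
    have h1 : (2:ℝ)^a ≤ |((x i1 - y i1 : ℤ):ℝ)| := by
      have h2 : (2:ℤ)^a ≤ |x i1 - y i1| :=
        Int.le_of_dvd (abs_pos.mpr (sub_ne_zero.mpr hi1)) ((dvd_abs _ _).mpr (hdvd i1))
      calc (2:ℝ)^a = ((2^a : ℤ) : ℝ) := by push_cast; ring
      _ ≤ ((|x i1 - y i1| : ℤ) : ℝ) := by exact_mod_cast h2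
      _ = |((x i1 - y i1 : ℤ):ℝ)| := by push_cast; ring
    have hsum : ((2:ℝ)^a)^P ≤ ∑ i, |((x i - y i:ℤ):ℝ)|^P :=
      le_trans (Real.rpow_le_rpow (by positivity) h1 hP0.le)
        (Finset.single_le_sum (f := fun i => |((x i - y i:ℤ):ℝ)|^P) (fun i _ => by positivity) (Finset.mem_univ i1))
    have h2a : (2:ℝ)^a ≤ (∑ i, |((x i - y i:ℤ):ℝ)|^P)^(1/P) := by
      calc (2:ℝ)^a = (((2:ℝ)^a)^P)^(1/P) := (cancel _ (by positivity)).symm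
      _ ≤ _ := Real.rpow_le_rpow (by positivity) hsum (by positivity)
    exact le_trans (csInf_le hSbdd (Set.mem_insert _ _)) h2a
  · -- Case 2
    push_neg at hdvd
    have hq : ∃ m : ℕ, ∃ i, ¬ (2:ℤ)^m ∣ (x i - y i) := ⟨a, hdvd⟩
    obtain ⟨iodd, hiodd⟩ := Nat.find_spec hq
    set m := Nat.find hq with hmdef
    have hm_le : m ≤ a := Nat.find_min' hq hdvd
    have hm_pos : 0 < m := by
      rcases Nat.eq_zero_or_pos m with h0 | hpos
      · exfalso
        have h1 := hiodd
        rw [show m = 0 from h0] at h1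
        simp at h1
      · exact hpos
    set k := m - 1 with hkdef
    have hmk : m = k + 1 := by omega
    have hka : k < a := by omega
    have hdvdk : ∀ i, (2:ℤ)^k ∣ (x i - y i) := by
      intro i
      by_contra hc
      exact (Nat.find_min hq (show k < m by omega)) ⟨i, hc⟩
    set w : Fin n → ℤ := fun i => (x i - y i) / 2^k with hwdef
    have hvw : ∀ i, x i - y i = 2^k * w i := fun i => (Int.mul_ediv_cancel' (hdvdk i)).symm
    have hwodd : ¬ (2:ℤ) ∣ w iodd := by
      intro hc
      apply hiodd
      rw [hmk, pow_succ, hvw iodd]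
      exact mul_dvd_mul dvd_rfl hc
    set ℓ := a - k with hldef
    have hℓ1 : 1 ≤ ℓ := by omega
    have hℓa : ℓ ≤ a := by omega
    have haℓ : a - ℓ = k := by omega
    set z : Fin n → ZMod 2 := fun i => ((w i : ℤ) : ZMod 2) with hzdef
    have hzC : z ∈ C ℓ := by
      apply mem_of_orth_span (C ℓ) _ (hgen ℓ hℓ1 hℓa)
      rintro g ⟨j, ⟨hj1, hj2⟩, rfl⟩
      -- minimal s with j ≤ r (s+1)
      have hqj : ∃ s : ℕ, j ≤ r (s + 1) := ⟨ℓ - 1, by rwa [show ℓ - 1 + 1 = ℓ by omega]⟩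
      set s := Nat.find hqj with hsdef
      have hs_spec : j ≤ r (s + 1) := Nat.find_spec hqj
      have hs_le : s ≤ ℓ - 1 := Nat.find_min' hqj (by rwa [show ℓ - 1 + 1 = ℓ by omega])
      have hsr : r s < j := by
        rcases Nat.eq_zero_or_pos s with h0 | hpos
        · rw [h0, hr0]; omega
        · have hmin := Nat.find_min hqj (show s - 1 < s by omega)
          rw [show s - 1 + 1 = s by omega] at hmin
          omega
      set t := a - (s + 1) with htdef
      have ht_lt : t < a := by omega
      have h1 : a - t = s + 1 := by omega
      have h2 : a - t - 1 = s := by omega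
      have hdiv0 := hv t ht_lt j (by rw [h2]; exact hsr) (by rw [h1]; exact hs_spec)
      have hdiv : (2:ℤ)^(t+1) ∣ ∑ i, (x i - y i) * ((h j i).val : ℤ) := by
        exact_mod_cast hdiv0
      have htk : k ≤ t := by omega
      have hsum2 : (2:ℤ) ∣ ∑ i, w i * ((h j i).val : ℤ) := by
        have he : ∑ i, (x i - y i) * ((h j i).val:ℤ) = 2^k * ∑ i, w i * ((h j i).val:ℤ) := by
          rw [Finset.mul_sum]
          exact Finset.sum_congr rfl fun i _ => by rw [hvw i, mul_assoc]
        rw [he, show (2:ℤ)^(t+1) = 2^k * 2^(t+1-k) by rw [← pow_add]; congr 1; omega] at hdiv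
        have h2dvd := (mul_dvd_mul_iff_left (a := (2:ℤ)^k)
          (by positivity : (0:ℤ) < 2^k).ne').mp hdiv
        exact dvd_trans (dvd_pow_self 2 (by omega : t+1-k ≠ 0)) h2dvd
      have hcast := (ZMod.intCast_zmod_eq_zero_iff_dvd _ 2).mpr hsum2
      push_cast at hcast
      simpa [hzdef, ZMod.natCast_val, ZMod.cast_id] using hcast
    have hzne : z ≠ 0 := by
      intro hc
      apply hwodd
      have h0 : z iodd = 0 := by rw [hc]; rfl
      rwa [hzdef, ZMod.intCast_zmod_eq_zero_iff_dvd] at h0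
    -- code distance element
    have hcd : codeDistP 2 n P (C ℓ : Set (Fin n → ZMod 2))
        ≤ (∑ i, ((min ((z i - (0 : Fin n → ZMod 2) i).val)
            (2 - (z i - (0 : Fin n → ZMod 2) i).val) : ℕ) : ℝ)^P)^(1/P) := by
      apply csInf_le
      · refine ⟨0, ?_⟩
        rintro d ⟨x', _, y', _, _, rfl⟩
        positivity
      · exact ⟨z, hzC, 0, (C ℓ).zero_mem, hzne, rfl⟩
    have hterm : ∀ i : Fin n, ((min ((z i - (0 : Fin n → ZMod 2) i).val)
        (2 - (z i - (0 : Fin n → ZMod 2) i).val) : ℕ) : ℝ) = ((z i).val : ℝ) := by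
      intro i
      have hval : (z i).val < 2 := ZMod.val_lt (z i)
      simp only [Pi.zero_apply, sub_zero]
      congr 1
      omega
    have hwge : ∀ i, ((z i).val : ℝ) ≤ |(w i : ℝ)| := by
      intro i
      rcases eq_or_ne (z i) 0 with h0 | h0
      · simp [h0]
      · have hw0 : w i ≠ 0 := by
          intro hc; apply h0; simp [hzdef, hc]
        have h1 : (1:ℝ) ≤ |(w i : ℝ)| := by
          have h2 : (1:ℤ) ≤ |w i| := Int.one_le_abs hw0
          calc (1:ℝ) = ((1:ℤ):ℝ) := by norm_num
          _ ≤ ((|w i| : ℤ) : ℝ) := by exact_mod_cast h2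
          _ = |(w i : ℝ)| := by push_cast; ring
        have hval : (z i).val < 2 := ZMod.val_lt (z i)
        have : ((z i).val : ℝ) ≤ 1 := by exact_mod_cast Nat.lt_succ_iff.mp hval
        linarith
    have hsum : ((2:ℝ)^k)^P * (∑ i, ((z i).val : ℝ)^P) ≤ ∑ i, |((x i - y i:ℤ):ℝ)|^P := by
      rw [Finset.mul_sum]
      apply Finset.sum_le_sum
      intro i _
      have h1 : |((x i - y i : ℤ):ℝ)| = 2^k * |(w i : ℝ)| := by
        rw [hvw i]; push_cast; rw [abs_mul, abs_of_nonneg (by positivity : (0:ℝ) ≤ 2^k)]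
      rw [h1, Real.mul_rpow (by positivity) (abs_nonneg _)]
      exact mul_le_mul_of_nonneg_left
        (Real.rpow_le_rpow (by positivity) (hwge i) hP0.le) (by positivity)
    have hfinal : (2:ℝ)^(a-ℓ) * codeDistP 2 n P (C ℓ : Set (Fin n → ZMod 2))
        ≤ (∑ i, |((x i - y i:ℤ):ℝ)|^P)^(1/P) := by
      rw [haℓ]
      calc (2:ℝ)^k * codeDistP 2 n P (C ℓ : Set (Fin n → ZMod 2))
          ≤ (2:ℝ)^k * (∑ i, ((min ((z i - (0 : Fin n → ZMod 2) i).val)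
              (2 - (z i - (0 : Fin n → ZMod 2) i).val) : ℕ) : ℝ)^P)^(1/P) :=
            mul_le_mul_of_nonneg_left hcd (by positivity)
      _ = (((2:ℝ)^k)^P * ∑ i, ((z i).val : ℝ)^P)^(1/P) := by
            rw [Finset.sum_congr rfl (fun i _ => by rw [hterm i]),
              Real.mul_rpow (by positivity) (by positivity), cancel _ (by positivity)]
      _ ≤ _ := Real.rpow_le_rpow (by positivity) hsum (by positivity)
    exact le_trans (csInf_le hSbdd
      (Set.mem_insert_of_mem _ ⟨ℓ, Finset.mem_Icc.mpr ⟨hℓ1, hℓa⟩, rfl⟩)) hfinal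
end
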